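/- arXiv:1707.01737 — 2 statements merged into one kernel-verified Lean document; each statement's English description precedes it below -/
import Mathlib

section
/- For 0 < q < 1 and ν > 0, the phase velocity v_ph(k) = (exp(νk² ln q) - 1)/(k(q-1)) is bounded above on (0, ∞): there exists M such that v_ph(k) ≤ M for all k > 0. -/
/-- For `0 < q < 1` and `ν > 0`, the phase velocity
`v_ph(k) = (exp(νk² ln q) - 1)/(k(q-1))` is bounded above on `(0, ∞)`. -/
theorem phaseVel_boundedAbove (ν q : ℝ) (hν : 0 < ν) (hq0 : 0 < q) (hq1 : q < 1) :
    ∃ M : ℝ, ∀ k : ℝ, 0 < k →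
      (Real.exp (ν * k ^ 2 * Real.log q) - 1) / (k * (q - 1)) ≤ M := by
  have hlq : Real.log q < 0 := Real.log_neg hq0 hq1
  have h1q : 0 < 1 - q := by linarith
  refine ⟨max (1 / (1 - q)) (ν * (-Real.log q) / (1 - q)), fun k hk => ?_⟩
  set X := ν * k ^ 2 * Real.log q with hX
  have hx : X ≤ 0 := mul_nonpos_of_nonneg_of_nonpos (by positivity) hlq.le
  have he1 : Real.exp X ≤ 1 := Real.exp_le_one_iff.mpr hx
  have heq : (Real.exp X - 1) / (k * (q - 1)) = (1 - Real.exp X) / (k * (1 - q)) := by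
    have hk0 : k ≠ 0 := ne_of_gt hk
    have hq' : q - 1 ≠ 0 := by linarith
    field_simp
    ring
  rw [heq]
  have hden : 0 < k * (1 - q) := by positivity
  rcases le_total k 1 with hk1 | hk1
  · refine le_trans ?_ (le_max_right _ _)
    have hnum : 1 - Real.exp X ≤ ν * k ^ 2 * (-Real.log q) := by
      have h := Real.add_one_le_exp X
      have : -(X) = ν * k ^ 2 * (-Real.log q) := by rw [hX]; ring
      linarith
    calc (1 - Real.exp X) / (k * (1 - q))
        ≤ (ν * k ^ 2 * (-Real.log q)) / (k * (1 - q)) := by gcongr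
      _ = ν * k * (-Real.log q) / (1 - q) := by
          have hk0 : k ≠ 0 := ne_of_gt hk
          field_simp
      _ ≤ ν * (-Real.log q) / (1 - q) := by
          have h2 : ν * k * (-Real.log q) ≤ ν * (-Real.log q) := by nlinarith [mul_nonneg (mul_nonneg (by linarith : (0:ℝ) ≤ 1 - k) hν.le) (neg_nonneg.mpr hlq.le)]
          gcongr
  · refine le_trans ?_ (le_max_left _ _)
    exact div_le_div₀ zero_le_one (by linarith [Real.exp_pos X]) h1q (by nlinarith)
end

section
/- As formal power series in k, exp(kx) · exp(t(e^{ak²} - 1)/(q-1)) = Σ_{N≥0} (k^N/N!) K_N(x,t), where K_N(x,t) = Σ_{n=0}^{⌊N/2⌋} (N!/((N-2n)! n!)) x^{N-2n} B_n(t/(q-1)) a^n, with B_n the Bell polynomials and a = ν ln q. -/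
/-- Stirling numbers of the second kind. -/
def stirling2 : ℕ → ℕ → ℕ
  | 0, 0 => 1
  | 0, _ + 1 => 0
  | _ + 1, 0 => 0
  | n + 1, k + 1 => (k + 1) * stirling2 n (k + 1) + stirling2 n k

/-- Bell (Touchard) polynomials `B_n(x) = Σ_{k=0}^n S(n,k) x^k`. -/
noncomputable def bellPoly (n : ℕ) : Polynomial ℝ :=
  ∑ k ∈ Finset.range (n + 1), (stirling2 n k : ℝ) • Polynomial.X ^ k

/-- Generalized Kampe de Feriet polynomials
`K_N(x,t) = Σ_{n=0}^{⌊N/2⌋} N!/((N-2n)! n!) x^{N-2n} B_n(t/(q-1)) a^n`, `a = ν ln q`. -/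
noncomputable def KdF (ν t x q : ℝ) (N : ℕ) : ℝ :=
  ∑ n ∈ Finset.range (N / 2 + 1),
    (N.factorial : ℝ) / (((N - 2 * n).factorial : ℝ) * (n.factorial : ℝ)) *
      x ^ (N - 2 * n) * (bellPoly n).eval (t / (q - 1)) * (ν * Real.log q) ^ n

/-!
Writing `x ^ n = ∑ S(n, k) x(x-1)⋯(x-k+1)` and summing `j(j-1)⋯(j-k+1) y ^ j / j! = y ^ k e^y`
gives Dobinski's formula `∑_j j ^ n y ^ j / j! = e^y B_n(y)`. Expanding `e^{jz}` in
`exp(y e^z) = ∑_j (y e^z) ^ j / j!` and summing the absolutely convergent double series over `j`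
first then yields `∑_n B_n(y) z ^ n / n! = exp(y(e^z - 1))`. With `y = t/(q-1)`, `z = a k²`, the
product of this series with `e^{kx} = ∑_m (kx) ^ m / m!` is absolutely convergent, and collecting
its terms along `m + 2n = N` produces `k ^ N K_N / N!`.
-/
open Finset Real
open scoped Nat

theorem stirling2_eq_stirlingSecond : ∀ n k : ℕ, stirling2 n k = Nat.stirlingSecond n k
  | 0, 0 => rfl
  | 0, _ + 1 => rfl
  | _ + 1, 0 => rfl
  | n + 1, k + 1 => by
    rw [stirling2, Nat.stirlingSecond_succ_succ, stirling2_eq_stirlingSecond n (k + 1),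
      stirling2_eq_stirlingSecond n k]

theorem bellPoly_eval (n : ℕ) (y : ℝ) :
    (bellPoly n).eval y = ∑ k ∈ range (n + 1), (Nat.stirlingSecond n k : ℝ) * y ^ k := by
  simp [bellPoly, Polynomial.eval_finsetSum, stirling2_eq_stirlingSecond]

theorem abs_bellPoly_eval_le (n : ℕ) (y : ℝ) : |(bellPoly n).eval y| ≤ (bellPoly n).eval |y| := by
  rw [bellPoly_eval, bellPoly_eval]
  refine (abs_sum_le_sum_abs _ _).trans (sum_le_sum fun k _ => ?_)
  rw [abs_mul, abs_pow, Nat.abs_cast]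

theorem Nat.mul_descFactorial (x k : ℕ) :
    x * x.descFactorial k = x.descFactorial (k + 1) + k * x.descFactorial k := by
  rcases lt_or_ge x k with hlt | hle
  · simp [Nat.descFactorial_of_lt hlt]
  · rw [Nat.descFactorial_succ, ← add_mul, Nat.sub_add_cancel hle]

theorem Nat.pow_eq_sum_stirlingSecond_mul_descFactorial (x n : ℕ) :
    x ^ n = ∑ k ∈ range (n + 1), Nat.stirlingSecond n k * x.descFactorial k := by
  induction n with
  | zero => simp
  | succ n ih =>
    have hshift : ∑ k ∈ range (n + 1), k * (Nat.stirlingSecond n k * x.descFactorial k) =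
        ∑ k ∈ range (n + 1),
          (k + 1) * (Nat.stirlingSecond n (k + 1) * x.descFactorial (k + 1)) := by
      rw [sum_range_succ', sum_range_succ, Nat.stirlingSecond_eq_zero_of_lt n.lt_succ_self]
      simp
    calc x ^ (n + 1)
        = ∑ k ∈ range (n + 1), Nat.stirlingSecond n k * (x * x.descFactorial k) := by
          rw [pow_succ', ih, mul_sum]; exact sum_congr rfl fun k _ => by ring
      _ = ∑ k ∈ range (n + 1), Nat.stirlingSecond n k * x.descFactorial (k + 1) +
            ∑ k ∈ range (n + 1), k * (Nat.stirlingSecond n k * x.descFactorial k) := by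
          rw [← sum_add_distrib]
          exact sum_congr rfl fun k _ => by rw [Nat.mul_descFactorial]; ring
      _ = ∑ k ∈ range (n + 2), Nat.stirlingSecond (n + 1) k * x.descFactorial k := by
          rw [hshift, ← sum_add_distrib, sum_range_succ' _ (n + 1)]
          simp only [Nat.stirlingSecond_succ_succ, Nat.stirlingSecond_succ_zero, zero_mul,
            add_zero]
          exact sum_congr rfl fun k _ => by ring

theorem Real.hasSum_pow_div_factorial (x : ℝ) : HasSum (fun n => x ^ n / n !) (exp x) :=
  Real.exp_eq_exp_ℝ ▸ NormedSpace.expSeries_div_hasSum_exp x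

theorem hasSum_descFactorial_mul_pow_div_factorial (k : ℕ) (y : ℝ) :
    HasSum (fun j : ℕ => (j.descFactorial k : ℝ) * y ^ j / j !) (y ^ k * exp y) := by
  have hvanish : ∑ j ∈ range k, (j.descFactorial k : ℝ) * y ^ j / j ! = 0 :=
    sum_eq_zero fun j hj => by simp [Nat.descFactorial_of_lt (mem_range.mp hj)]
  rw [← hasSum_nat_add_iff' k, hvanish, sub_zero]
  refine ((Real.hasSum_pow_div_factorial y).mul_left (y ^ k)).congr_fun fun m => ?_
  have hfac : (m ! : ℝ) * (m + k).descFactorial k = (m + k)! := by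
    exact_mod_cast Nat.add_sub_cancel m k ▸ Nat.factorial_mul_descFactorial (Nat.le_add_left k m)
  rw [← hfac, pow_add]
  field_simp

theorem hasSum_pow_mul_pow_div_factorial (n : ℕ) (y : ℝ) :
    HasSum (fun j : ℕ => (j : ℝ) ^ n * y ^ j / j !) (exp y * (bellPoly n).eval y) := by
  have hterms := hasSum_sum fun k (_ : k ∈ range (n + 1)) =>
    (hasSum_descFactorial_mul_pow_div_factorial k y).mul_left (Nat.stirlingSecond n k : ℝ)
  have hvalue : exp y * (bellPoly n).eval y =
      ∑ k ∈ range (n + 1), (Nat.stirlingSecond n k : ℝ) * (y ^ k * exp y) := by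
    rw [bellPoly_eval, mul_sum]
    exact sum_congr rfl fun k _ => by ring
  rw [hvalue]
  refine hterms.congr_fun fun j => ?_
  rw [← Nat.cast_pow, Nat.pow_eq_sum_stirlingSecond_mul_descFactorial j n]
  push_cast
  rw [sum_mul, sum_div]
  exact sum_congr rfl fun k _ => by ring

noncomputable def expExpSeriesTerm (y z : ℝ) (p : ℕ × ℕ) : ℝ :=
  y ^ p.1 / p.1 ! * ((p.1 * z) ^ p.2 / p.2 !)

theorem hasSum_expExpSeriesTerm_row (y z : ℝ) (j : ℕ) :
    HasSum (fun n => expExpSeriesTerm y z (j, n)) ((y * exp z) ^ j / j !) := by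
  have hvalue : (y * exp z) ^ j / j ! = y ^ j / j ! * exp (j * z) := by
    rw [Real.exp_nat_mul]; ring
  rw [hvalue]
  exact (Real.hasSum_pow_div_factorial (j * z)).mul_left (y ^ j / j !)

theorem summable_expExpSeriesTerm (y z : ℝ) : Summable (expExpSeriesTerm y z) := by
  have habs : Summable (expExpSeriesTerm |y| |z|) := by
    refine (summable_prod_of_nonneg fun p => by unfold expExpSeriesTerm; positivity).2
      ⟨fun j => (hasSum_expExpSeriesTerm_row |y| |z| j).summable, ?_⟩
    simp only [fun j => (hasSum_expExpSeriesTerm_row |y| |z| j).tsum_eq]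
    exact (Real.hasSum_pow_div_factorial _).summable
  refine habs.of_norm_bounded fun p => le_of_eq ?_
  simp [expExpSeriesTerm]

theorem hasSum_expExpSeriesTerm (y z : ℝ) :
    HasSum (expExpSeriesTerm y z) (exp (y * exp z)) := by
  obtain ⟨s, hs⟩ := summable_expExpSeriesTerm y z
  rwa [(hs.prod_fiberwise (hasSum_expExpSeriesTerm_row y z)).unique
    (Real.hasSum_pow_div_factorial _)] at hs

theorem hasSum_bellPoly_eval_mul_pow_div_factorial (y z : ℝ) :
    HasSum (fun n => (bellPoly n).eval y * z ^ n / n !) (exp (y * (exp z - 1))) := by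
  have hcolumn (n : ℕ) : HasSum (fun j => expExpSeriesTerm y z (j, n))
      (z ^ n / n ! * (exp y * (bellPoly n).eval y)) := by
    refine ((hasSum_pow_mul_pow_div_factorial n y).mul_left (z ^ n / n !)).congr_fun fun j => ?_
    simp only [expExpSeriesTerm, mul_pow]
    ring
  have hswap := (Equiv.prodComm ℕ ℕ).hasSum_iff.mpr (hasSum_expExpSeriesTerm y z)
  have hcolumns := (hswap.prod_fiberwise hcolumn).mul_left (exp (-y))
  rw [← Real.exp_add, show -y + y * exp z = y * (exp z - 1) by ring] at hcolumns
  refine hcolumns.congr_fun fun n => ?_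
  rw [Real.exp_neg]
  field_simp

theorem summable_norm_bellPoly_eval_mul_pow_div_factorial (y z : ℝ) :
    Summable fun n => ‖(bellPoly n).eval y * z ^ n / (n ! : ℝ)‖ := by
  refine (hasSum_bellPoly_eval_mul_pow_div_factorial |y| |z|).summable.of_nonneg_of_le
    (fun _ => norm_nonneg _) fun n => ?_
  rw [Real.norm_eq_abs, abs_div, abs_mul, abs_pow, Nat.abs_cast]
  gcongr
  exact abs_bellPoly_eval_le n y

theorem HasSum.sum_fiber_add_two_mul {α : Type*} [AddCommMonoid α] [TopologicalSpace α]
    [ContinuousAdd α] [RegularSpace α] {f : ℕ × ℕ → α} {a : α} (hf : HasSum f a) :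
    HasSum (fun N => ∑ n ∈ range (N / 2 + 1), f (N - 2 * n, n)) a := by
  let e : (Σ N : ℕ, Fin (N / 2 + 1)) → ℕ × ℕ := fun s => (s.1 - 2 * s.2, s.2)
  have he : e.Bijective := by
    refine ⟨fun ⟨N, n⟩ ⟨M, m⟩ h => ?_, fun ⟨m, n⟩ => ⟨⟨m + 2 * n, ⟨n, by omega⟩⟩, by simp [e]⟩⟩
    simp only [e, Prod.mk.injEq] at h
    obtain rfl : N = M := by omega
    simp [Fin.ext h.2]
  refine ((Equiv.ofBijective e he).hasSum_iff.mpr hf).sigma fun N => ?_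
  rw [← Fin.sum_univ_eq_sum_range (fun n => f (N - 2 * n, n))]
  exact hasSum_fintype _

theorem KdF_generating_function_general (ν t x q k : ℝ) :
    HasSum (fun N : ℕ => k ^ N / (N.factorial : ℝ) * KdF ν t x q N)
      (Real.exp (k * x) *
        Real.exp (t * (Real.exp (ν * Real.log q * k ^ 2) - 1) / (q - 1))) := by
  set y := t / (q - 1)
  set a := ν * Real.log q
  rw [show t * (exp (a * k ^ 2) - 1) / (q - 1) = y * (exp (a * k ^ 2) - 1) by ring]
  have hexp_norm : Summable fun m : ℕ => ‖(k * x) ^ m / (m ! : ℝ)‖ :=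
    NormedSpace.norm_expSeries_div_summable (k * x)
  have hbell_norm := summable_norm_bellPoly_eval_mul_pow_div_factorial y (a * k ^ 2)
  have hprod_summable := summable_mul_of_summable_norm hexp_norm hbell_norm
  have hproduct := (Real.hasSum_pow_div_factorial (k * x)).mul
    (hasSum_bellPoly_eval_mul_pow_div_factorial y (a * k ^ 2)) hprod_summable
  refine hproduct.sum_fiber_add_two_mul.congr_fun fun N => ?_
  rw [KdF, mul_sum]
  refine sum_congr rfl fun n hn => ?_
  obtain ⟨m, rfl⟩ : ∃ m, N = m + 2 * n := ⟨N - 2 * n, by have := mem_range.mp hn; omega⟩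
  rw [Nat.add_sub_cancel]
  field_simp
  ring

/-- `exp(kx) exp(t(e^{ak²}-1)/(q-1)) = Σ_N (k^N/N!) K_N(x,t)` with `a = ν ln q`. -/
theorem KdF_generating_function (ν t x q k : ℝ) (hq : 0 < q) (hq1 : q ≠ 1) :
    HasSum (fun N : ℕ => k ^ N / (N.factorial : ℝ) * KdF ν t x q N)
      (Real.exp (k * x) *
        Real.exp (t * (Real.exp (ν * Real.log q * k ^ 2) - 1) / (q - 1))) :=
  KdF_generating_function_general ν t x q k
end
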